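/- arXiv:2204.02778 — 2 statements merged into one kernel-verified Lean document; each statement's English description precedes it below -/
import Mathlib

section
/- If (X, A) is an NDR-pair over B represented by (u, h), and C → B is any space over B, then (X ×_B C, A ×_B C) is an NDR-pair over B. -/
open unitInterval

/-- A pair `A ⊆ X` of spaces over `B` (with structure map `πX : X → B`) is an *NDR-pair over
`B`* if there are a map `u : X → [0,1] × B` over `B` and a homotopy `h : X × [0,1] → X` over
`B` such that `A = u⁻¹({0} × B)`, `h(−,0) = id_X`, `h` is stationary on `A`, and
`h(x,1) ∈ A` whenever `u(x) ∈ [0,1) × B`. -/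
def IsNDRPairOver {X B : Type} [TopologicalSpace X] [TopologicalSpace B]
    (πX : C(X, B)) (A : Set X) : Prop :=
  ∃ (u : C(X, I × B)) (h : C(X × I, X)),
    (∀ x, (u x).2 = πX x) ∧
    (∀ x t, πX (h (x, t)) = πX x) ∧
    (A = {x | (u x).1 = 0}) ∧
    (∀ x, h (x, 0) = x) ∧
    (∀ a ∈ A, ∀ t, h (a, t) = a) ∧
    (∀ x, (u x).1 < 1 → h (x, 1) ∈ A)

def fibreProdHomotopy {X B C : Type} [TopologicalSpace X] [TopologicalSpace B]
    [TopologicalSpace C] {πX : C(X, B)} (γ : C(C, B)) (h : C(X × I, X))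
    (hπ : ∀ x t, πX (h (x, t)) = πX x) :
    C({z : X × C // πX z.1 = γ z.2} × I, {z : X × C // πX z.1 = γ z.2}) where
  toFun p := ⟨(h (p.1.1.1, p.2), p.1.1.2), (hπ _ _).trans p.1.2⟩
  continuous_toFun := by fun_prop

/-- If `(X, A)` is an NDR-pair over `B`, and `C → B` is any space over `B`,
then `(X ×_B C, A ×_B C)` is an NDR-pair over `B`, where the fibred products are taken along
the structure maps and the structure map of `X ×_B C` is induced by that of `X`. -/
theorem stmt_12 {X B C : Type} [TopologicalSpace X] [TopologicalSpace B] [TopologicalSpace C]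
    (πX : C(X, B)) (A : Set X) (γ : C(C, B))
    (hA : IsNDRPairOver πX A) :
    IsNDRPairOver
      (⟨fun z : {z : X × C // πX z.1 = γ z.2} => πX z.1.1,
        (map_continuous πX).comp (continuous_fst.comp continuous_subtype_val)⟩ :
        C({z : X × C // πX z.1 = γ z.2}, B))
      {z : {z : X × C // πX z.1 = γ z.2} | z.1.1 ∈ A} := by
  obtain ⟨u, h, hu, hπ, hA_eq, h_zero, h_stat, h_one⟩ := hA
  refine ⟨⟨fun z => u z.1.1, by fun_prop⟩, fibreProdHomotopy γ h hπ,
    fun z => hu z.1.1, fun z t => hπ z.1.1 t, by simp [hA_eq],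
    fun z => Subtype.ext (Prod.ext (h_zero z.1.1) rfl),
    fun z hz t => Subtype.ext (Prod.ext (h_stat z.1.1 hz t) rfl),
    fun z hz => h_one z.1.1 hz⟩
end

section
/- For a functor f : X → Y of small categories, the diagonal of the bisimplicial set D(f) with D(f)_{p,q} = N(Y^op)_p ×_{Y₀} Y₁ ×_{Y₀} N(X)_q (with the twisted face maps d₀ in each direction given by composition with the connecting arrow η) is isomorphic to the nerve of the category S(f), the strict pullback of cod^♮ : ♮Y → Y along f. -/
open CategoryTheory Opposite

/-- The category `S(f)`: the strict pullback of `cod^♮ : ♮Y → Y` (the twisted arrow category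
of `Y` mapping to `Y` by the codomain) along `f : X → Y`, described concretely: objects are
pairs of an object `mid` of `X` and a morphism `hom : left ⟶ f(mid)` in `Y`; a morphism
`(a, x, g) → (a', x', g')` is a pair `k : a' → a`, `h : x → x'` with `f(h) ∘ g ∘ k = g'`. -/
structure SCat {X Y : Type} [SmallCategory X] [SmallCategory Y] (f : X ⥤ Y) : Type where
  left : Y
  mid : X
  hom : left ⟶ f.obj mid

namespace SCat

variable {X Y : Type} [SmallCategory X] [SmallCategory Y] {f : X ⥤ Y}

@[ext]
structure Hom (g g' : SCat f) : Type where
  k : g'.left ⟶ g.left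
  h : g.mid ⟶ g'.mid
  w : k ≫ g.hom ≫ f.map h = g'.hom := by aesop_cat

instance : Category (SCat f) where
  Hom := Hom
  id g := { k := 𝟙 g.left, h := 𝟙 g.mid }
  comp f₁ f₂ :=
    { k := f₂.k ≫ f₁.k
      h := f₁.h ≫ f₂.h
      w := by rw [← f₂.w, ← f₁.w]; simp }
  id_comp f := Hom.ext (by simp) (by simp)
  comp_id f := Hom.ext (by simp) (by simp)
  assoc f g h := Hom.ext (by simp) (by simp)

end SCat

/-- The set of `(p, q)`-simplices of the bisimplicial set `D(f)`:
`D(f)_{p,q} = N(Yᵒᵖ)_p ×_{Y₀} Y₁ ×_{Y₀} N(X)_q`, i.e. chains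
`y_p → ⋯ → y_0`, an arrow `η : y_0 → f(x_0)`, and a chain `x_0 → ⋯ → x_q`. -/
def DS {X Y : Type} [SmallCategory X] [SmallCategory Y] (f : X ⥤ Y) (p q : ℕ) : Type :=
  Σ' (F : ComposableArrows Yᵒᵖ p) (G : ComposableArrows X q),
    (F.obj 0).unop ⟶ f.obj (G.obj 0)

/-! A simplex of the nerve of `S(f)` is a chain `(a_i, x_i, g_i)` in `S(f)`. Its projections are
chains in `Yᵒᵖ` and in `X`, and every `g_i` is forced by `g_0`: it equals
`a_i → a_0 → f(x_0) → f(x_i)`, the morphism of `S(f)` from vertex `0` to vertex `i` being a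
commutative square. So the chain is the same thing as a diagonal simplex `(y_•, η, x_•)` of
`D(f)`, and the face and degeneracy operators match because `D(f)` moves `η` to the new vertex
`0` by exactly this composite. -/

namespace SCat

variable {X Y : Type} [SmallCategory X] [SmallCategory Y] {f : X ⥤ Y}

@[simp] lemma id_k (s : SCat f) : (𝟙 s : s ⟶ s).k = 𝟙 s.left := rfl
@[simp] lemma id_h (s : SCat f) : (𝟙 s : s ⟶ s).h = 𝟙 s.mid := rfl
@[simp] lemma comp_k {a b c : SCat f} (φ : a ⟶ b) (ψ : b ⟶ c) : (φ ≫ ψ).k = ψ.k ≫ φ.k := rfl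
@[simp] lemma comp_h {a b c : SCat f} (φ : a ⟶ b) (ψ : b ⟶ c) : (φ ≫ ψ).h = φ.h ≫ ψ.h := rfl

lemma hom_eq_eqToHom_comp_of_heq {s₁ s₂ t₁ t₂ : SCat f} (e₁ : s₁ = s₂) (e₂ : t₁ = t₂)
    (φ : s₁ ⟶ t₁) (ψ : s₂ ⟶ t₂) (hk : HEq φ.k ψ.k) (hh : HEq φ.h ψ.h) :
    φ = eqToHom e₁ ≫ ψ ≫ eqToHom e₂.symm := by
  subst e₁ e₂
  simpa using Hom.ext (eq_of_heq hk) (eq_of_heq hh)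

variable (f)

def projLeft : SCat f ⥤ Yᵒᵖ where
  obj s := op s.left
  map φ := φ.k.op

def projMid : SCat f ⥤ X where
  obj s := s.mid
  map φ := φ.h

end SCat

section ArrowAt

variable {X Y : Type} [SmallCategory X] [SmallCategory Y] {f : X ⥤ Y} {m n : ℕ}
  (F : ComposableArrows Yᵒᵖ m) (G : ComposableArrows X n) (η : (F.obj 0).unop ⟶ f.obj (G.obj 0))

def arrowAt (i : Fin (m + 1)) (j : Fin (n + 1)) : (F.obj i).unop ⟶ f.obj (G.obj j) :=
  (F.map (homOfLE i.zero_le)).unop ≫ η ≫ f.map (G.map (homOfLE j.zero_le))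

lemma arrowAt_comp {i i' : Fin (m + 1)} {j j' : Fin (n + 1)} (u : i ⟶ i') (v : j ⟶ j') :
    (F.map u).unop ≫ arrowAt F G η i j ≫ f.map (G.map v) = arrowAt F G η i' j' := by
  rw [arrowAt, arrowAt, Subsingleton.elim (homOfLE i'.zero_le) (homOfLE i.zero_le ≫ u),
    Subsingleton.elim (homOfLE j'.zero_le) (homOfLE j.zero_le ≫ v)]
  simp

lemma arrowAt_zero_left (j : Fin (n + 1)) :
    arrowAt F G η 0 j = η ≫ f.map (G.map (homOfLE j.zero_le)) := by
  simp [arrowAt]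

lemma arrowAt_zero_right (i : Fin (m + 1)) :
    arrowAt F G η i 0 = (F.map (homOfLE i.zero_le)).unop ≫ η := by
  simp [arrowAt]

lemma arrowAt_zero_zero : arrowAt F G η 0 0 = η := by
  simp [arrowAt_zero_left]

lemma arrowAt_heq_of_eq {i i' : Fin (m + 1)} {j j' : Fin (n + 1)} (hi : i = i') (hj : j = j') :
    HEq (arrowAt F G η i j) (arrowAt F G η i' j') := by
  subst hi hj
  rfl

def chainSCat {F : ComposableArrows Yᵒᵖ n} (G : ComposableArrows X n)
    (η : (F.obj 0).unop ⟶ f.obj (G.obj 0)) : ComposableArrows (SCat f) n where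
  obj i := ⟨(F.obj i).unop, G.obj i, arrowAt F G η i i⟩
  map u := { k := (F.map u).unop, h := G.map u, w := arrowAt_comp F G η u u }
  map_id _ := SCat.Hom.ext (by simp) (by simp)
  map_comp _ _ := SCat.Hom.ext (by simp) (by simp)

end ArrowAt

lemma DS.mk_congr {X Y : Type} [SmallCategory X] [SmallCategory Y] {f : X ⥤ Y} {p q : ℕ}
    {F : ComposableArrows Yᵒᵖ p} {G : ComposableArrows X q}
    {η η' : (F.obj 0).unop ⟶ f.obj (G.obj 0)}
    (h : η = η') : (⟨F, G, η⟩ : DS f p q) = ⟨F, G, η'⟩ := by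
  rw [h]

section Bisimplicial

variable {X Y : Type} [SmallCategory X] [SmallCategory Y] (f : X ⥤ Y)

/-- All operators `(φ, ψ)` at once: `η` is moved to the new vertex `(φ 0, ψ 0)`, which yields the
twisted `d₀`'s. -/
def bisimplicialD : SimplexCategoryᵒᵖ × SimplexCategoryᵒᵖ ⥤ Type where
  obj pq := DS f pq.1.unop.len pq.2.unop.len
  map φ := TypeCat.ofHom fun w =>
    ⟨(nerve Yᵒᵖ).map φ.1 w.1, (nerve X).map φ.2 w.2.1,
      arrowAt w.1 w.2.1 w.2.2 (φ.1.unop.toOrderHom 0) (φ.2.unop.toOrderHom 0)⟩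
  map_id _ := by
    ext ⟨F, G, η⟩
    exact DS.mk_congr (arrowAt_zero_zero F G η)
  map_comp _ _ := by
    ext ⟨F, G, η⟩
    exact DS.mk_congr (arrowAt_comp F G η _ _).symm

def nerveEquivDiagBisimplicialD (n : SimplexCategoryᵒᵖ) :
    (nerve (SCat f)).obj n ≃ (Functor.diag SimplexCategoryᵒᵖ ⋙ bisimplicialD f).obj n where
  toFun H := ⟨H ⋙ SCat.projLeft f, H ⋙ SCat.projMid f, (H.obj 0).hom⟩
  invFun w := chainSCat w.2.1 w.2.2
  left_inv H := by
    have hobj : ∀ i, (chainSCat (F := H ⋙ SCat.projLeft f) (H ⋙ SCat.projMid f)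
        (H.obj 0).hom).obj i = H.obj i := fun i =>
      congrArg (SCat.mk _ _) (H.map (homOfLE i.zero_le)).w
    exact CategoryTheory.Functor.ext hobj fun i j u =>
      SCat.hom_eq_eqToHom_comp_of_heq (hobj i) (hobj j) _ _ HEq.rfl HEq.rfl
  right_inv := fun ⟨F, G, η⟩ => DS.mk_congr (arrowAt_zero_zero F G η)

def diagBisimplicialDIsoNerve :
    Functor.diag SimplexCategoryᵒᵖ ⋙ bisimplicialD f ≅ (nerve (SCat f) : SSet) :=
  (NatIso.ofComponents (fun n => (nerveEquivDiagBisimplicialD f n).toIso) fun _ => by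
    ext H
    exact DS.mk_congr (H.map (homOfLE (Fin.zero_le _))).w.symm).symm

end Bisimplicial

/-- For a functor `f : X → Y` of small categories, the diagonal of the
bisimplicial set `D(f)` with `D(f)_{p,q} = N(Yᵒᵖ)_p ×_{Y₀} Y₁ ×_{Y₀} N(X)_q` — whose twisted
face maps `d₀` in each direction are given by composing the connecting arrow `η` with the
adjacent arrow of the chain, and whose remaining faces and degeneracies (equivalently, all
operators induced by vertex-`0`-preserving maps of `Δ`) come from `N(X)` and `N(Yᵒᵖ)` — is
isomorphic, as a simplicial set, to the nerve of `S(f)`, the strict pullback of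
`cod^♮ : ♮Y → Y` along `f`. -/
theorem stmt_15 {X Y : Type} [SmallCategory X] [SmallCategory Y] (f : X ⥤ Y) :
    ∃ (D : SimplexCategoryᵒᵖ × SimplexCategoryᵒᵖ ⥤ Type)
      (e : ∀ p q : ℕ, D.obj (op (SimplexCategory.mk p), op (SimplexCategory.mk q)) ≃ DS f p q),
      -- operators induced by vertex-0-preserving maps act via the nerves, leaving η alone
      (∀ (p q q' : ℕ) (α : SimplexCategory.mk q' ⟶ SimplexCategory.mk q),
        α.toOrderHom 0 = 0 →
        ∀ w, (e p q' (D.map (𝟙 (op (SimplexCategory.mk p)), α.op) w)).1 = (e p q w).1 ∧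
          (e p q' (D.map (𝟙 (op (SimplexCategory.mk p)), α.op) w)).2.1 =
            (nerve X).map α.op (e p q w).2.1 ∧
          HEq (e p q' (D.map (𝟙 (op (SimplexCategory.mk p)), α.op) w)).2.2 (e p q w).2.2) ∧
      (∀ (p p' q : ℕ) (β : SimplexCategory.mk p' ⟶ SimplexCategory.mk p),
        β.toOrderHom 0 = 0 →
        ∀ w, (e p' q (D.map (β.op, 𝟙 (op (SimplexCategory.mk q))) w)).2.1 = (e p q w).2.1 ∧
          (e p' q (D.map (β.op, 𝟙 (op (SimplexCategory.mk q))) w)).1 =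
            (nerve Yᵒᵖ).map β.op (e p q w).1 ∧
          HEq (e p' q (D.map (β.op, 𝟙 (op (SimplexCategory.mk q))) w)).2.2 (e p q w).2.2) ∧
      -- the twisted horizontal d₀ composes η with (f applied to) the first arrow of the X-chain
      (∀ (p q : ℕ) (w : D.obj (op (SimplexCategory.mk p), op (SimplexCategory.mk (q + 1)))),
        (e p q (D.map (𝟙 (op (SimplexCategory.mk p)),
            (SimplexCategory.δ (0 : Fin (q + 2))).op) w)).1 = (e p (q + 1) w).1 ∧
        (e p q (D.map (𝟙 (op (SimplexCategory.mk p)),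
            (SimplexCategory.δ (0 : Fin (q + 2))).op) w)).2.1 =
          (nerve X).map (SimplexCategory.δ (0 : Fin (q + 2))).op (e p (q + 1) w).2.1 ∧
        HEq (e p q (D.map (𝟙 (op (SimplexCategory.mk p)),
            (SimplexCategory.δ (0 : Fin (q + 2))).op) w)).2.2
          ((e p (q + 1) w).2.2 ≫ f.map ((e p (q + 1) w).2.1.map' 0 1))) ∧
      -- the twisted vertical d₀ composes η with the last arrow of the Yᵒᵖ-chain
      (∀ (p q : ℕ) (w : D.obj (op (SimplexCategory.mk (p + 1)), op (SimplexCategory.mk q))),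
        (e p q (D.map ((SimplexCategory.δ (0 : Fin (p + 2))).op,
            𝟙 (op (SimplexCategory.mk q))) w)).2.1 = (e (p + 1) q w).2.1 ∧
        (e p q (D.map ((SimplexCategory.δ (0 : Fin (p + 2))).op,
            𝟙 (op (SimplexCategory.mk q))) w)).1 =
          (nerve Yᵒᵖ).map (SimplexCategory.δ (0 : Fin (p + 2))).op (e (p + 1) q w).1 ∧
        HEq (e p q (D.map ((SimplexCategory.δ (0 : Fin (p + 2))).op,
            𝟙 (op (SimplexCategory.mk q))) w)).2.2
          (((e (p + 1) q w).1.map' 0 1).unop ≫ (e (p + 1) q w).2.2)) ∧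
      -- the diagonal of D is isomorphic to the nerve of S(f)
      Nonempty ((Functor.diag SimplexCategoryᵒᵖ ⋙ D) ≅ (nerve (SCat f) : SSet)) := by
  refine ⟨bisimplicialD f, fun p q => Equiv.refl _, ?_, ?_, ?_, ?_,
    ⟨diagBisimplicialDIsoNerve f⟩⟩
  · rintro p q q' α hα ⟨F, G, η⟩
    exact ⟨rfl, rfl, (arrowAt_heq_of_eq F G η rfl hα).trans (heq_of_eq (arrowAt_zero_zero F G η))⟩
  · rintro p p' q β hβ ⟨F, G, η⟩
    exact ⟨rfl, rfl, (arrowAt_heq_of_eq F G η hβ rfl).trans (heq_of_eq (arrowAt_zero_zero F G η))⟩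
  -- `δ 0` sends the vertex `0` to `1` definitionally
  · rintro p q ⟨F, G, η⟩
    exact ⟨rfl, rfl, heq_of_eq (arrowAt_zero_left F G η 1)⟩
  · rintro p q ⟨F, G, η⟩
    exact ⟨rfl, rfl, heq_of_eq (arrowAt_zero_right F G η 1)⟩
end
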